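/- Let A and B be left-noetherian rings that are Morita equivalent (i.e., their categories of left modules are equivalent). If A satisfies the uniform Auslander condition (UAC), then B satisfies (UAC). -/

import Mathlib

open CategoryTheory

universe u

noncomputable abbrev ExtGroup {A : Type u} [Ring A] (M N : ModuleCat.{u} A) (i : ℕ) :=
  ((Ext ℤ (ModuleCat.{u} A) i).obj (Opposite.op M)).obj N

/-- The uniform Auslander condition (UAC). -/
def SatisfiesUAC (A : Type u) [Ring A] : Prop :=
  ∃ b : ℕ, ∀ M N : ModuleCat.{u} A, Module.Finite A M → Module.Finite A N →
    (∃ n : ℕ, ∀ i ≥ n, Subsingleton (ExtGroup M N i)) →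
    ∀ i > b, Subsingleton (ExtGroup M N i)

/-!
Both ingredients of (UAC) are categorical, so an equivalence `e` between the module categories
transports them. A module is finitely generated iff `⊤` is a compact element of its lattice of
submodules, and that lattice is the lattice of subobjects in the module category. Ext groups are
computed from a projective resolution; `e` carries a projective resolution of `X` to one of
`e.functor.obj X`, and the adjunction `e.functor ⊣ e.inverse` identifies the two Hom complexes.
Hence `e.inverse` preserves finite generation and Ext groups, and the bound `b` for `A` also
works for `B`.
-/

theorem OrderIso.isCompactElement_apply {α β : Type*} [PartialOrder α] [PartialOrder β]
    (f : α ≃o β) {k : α} (hk : IsCompactElement k) : IsCompactElement (f k) := by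
  intro s u ⟨x, hx⟩ hdir hlub hle
  obtain ⟨y, hy, hky⟩ := hk (f ⁻¹' s) (f.symm u) ⟨f.symm x, by simpa using hx⟩
    (fun a ha b hb => by
      obtain ⟨c, hc, hac, hbc⟩ := hdir _ ha _ hb
      exact ⟨f.symm c, by simpa using hc, by simpa [← f.le_iff_le] using hac,
        by simpa [← f.le_iff_le] using hbc⟩)
    (f.isLUB_preimage.mpr (by simpa using hlub)) (by simpa [← f.le_iff_le] using hle)
  exact ⟨f y, hy, f.le_iff_le.mpr hky⟩

namespace CategoryTheory

variable {C D : Type*} [Category C] [Category D]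

noncomputable def Equivalence.subobjectOrderIso (e : C ≌ D) (X : C) :
    Subobject X ≃o Subobject (e.functor.obj X) :=
  (Subobject.lowerEquivalence (MonoOver.congr X e)).toOrderIso

end CategoryTheory

namespace ModuleCat

variable {A B : Type u} [Ring A] [Ring B] (e : ModuleCat.{u} A ≌ ModuleCat.{u} B)

noncomputable def submoduleOrderIsoOfEquivalence (M : ModuleCat.{u} A) :
    Submodule A M ≃o Submodule B (e.functor.obj M) :=
  M.subobjectModule.symm.trans ((e.subobjectOrderIso M).trans (e.functor.obj M).subobjectModule)

theorem finite_functor_obj_of_equivalence (M : ModuleCat.{u} A) [Module.Finite A M] :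
    Module.Finite B (e.functor.obj M) := by
  rw [Module.finite_def, Submodule.fg_iff_compact, ← (submoduleOrderIsoOfEquivalence e M).map_top]
  exact OrderIso.isCompactElement_apply _
    ((Submodule.fg_iff_compact _).mp (Module.finite_def.mp ‹_›))

end ModuleCat

namespace CategoryTheory.Adjunction

variable {C D : Type*} [Category C] [Category D] [Abelian C] [Abelian D]
  [EnoughProjectives C] [EnoughProjectives D] {F : C ⥤ D} {G : D ⥤ C} (adj : F ⊣ G)
  [F.Additive] [F.PreservesProjectiveObjects] [F.PreservesHomology]

noncomputable def linearYonedaObjMapProjectiveResolutionIso {X : C} (P : ProjectiveResolution X)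
    (Y : D) :
    (F.mapProjectiveResolution P).complex.linearYonedaObj ℤ Y ≅
      P.complex.linearYonedaObj ℤ (G.obj Y) :=
  HomologicalComplex.Hom.isoOfComponents
    (fun n => (adj.homAddEquiv (P.complex.X n) Y).toIntLinearEquiv.toModuleIso)
    (fun _ _ _ => by
      ext f
      exact (adj.homEquiv_naturality_left _ _).symm)

noncomputable def extIso (X : C) (Y : D) (n : ℕ) :
    ((Ext ℤ D n).obj (Opposite.op (F.obj X))).obj Y ≅
      ((Ext ℤ C n).obj (Opposite.op X)).obj (G.obj Y) :=
  let P := ProjectiveResolution.of X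
  (F.mapProjectiveResolution P).isoExt n Y ≪≫
    (HomologicalComplex.homologyFunctor _ _ n).mapIso
      (adj.linearYonedaObjMapProjectiveResolutionIso P Y) ≪≫
    (P.isoExt n (G.obj Y)).symm

end CategoryTheory.Adjunction

namespace CategoryTheory.Equivalence

variable {C D : Type*} [Category C] [Category D] [Abelian C] [Abelian D]
  [EnoughProjectives C] [EnoughProjectives D] (e : C ≌ D)

noncomputable def extIso (M N : D) (n : ℕ) :
    ((Ext ℤ D n).obj (Opposite.op M)).obj N ≅
      ((Ext ℤ C n).obj (Opposite.op (e.inverse.obj M))).obj (e.inverse.obj N) :=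
  have : e.functor.Additive := Functor.additive_of_preserves_binary_products _
  ((Ext ℤ D n).mapIso (e.counitIso.app M).op).app N ≪≫ e.toAdjunction.extIso _ N n

end CategoryTheory.Equivalence

theorem SatisfiesUAC.of_equivalence {A B : Type u} [Ring A] [Ring B]
    (e : ModuleCat.{u} A ≌ ModuleCat.{u} B) (hA : SatisfiesUAC A) : SatisfiesUAC B := by
  have ext_vanishes_iff (M N : ModuleCat.{u} B) (i : ℕ) :
      Subsingleton (ExtGroup M N i) ↔
        Subsingleton (ExtGroup (e.inverse.obj M) (e.inverse.obj N) i) :=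
    (e.extIso M N i).toLinearEquiv.toEquiv.subsingleton_congr
  obtain ⟨b, hb⟩ := hA
  refine ⟨b, fun M N hM hN ⟨n, hn⟩ i hi => (ext_vanishes_iff M N i).mpr ?_⟩
  exact hb _ _ (ModuleCat.finite_functor_obj_of_equivalence e.symm M)
    (ModuleCat.finite_functor_obj_of_equivalence e.symm N)
    ⟨n, fun j hj => (ext_vanishes_iff M N j).mp (hn j hj)⟩ i hi

theorem stmt7_general (A B : Type u) [Ring A] [Ring B]
    (morita : Nonempty (ModuleCat.{u} A ≌ ModuleCat.{u} B))
    (hA : SatisfiesUAC A) : SatisfiesUAC B :=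
  hA.of_equivalence morita.some

/-- The uniform Auslander condition (UAC) transfers along Morita equivalence. -/
theorem stmt7 (A B : Type u) [Ring A] [Ring B]
    [IsNoetherianRing A] [IsNoetherianRing B]
    (morita : Nonempty (ModuleCat.{u} A ≌ ModuleCat.{u} B))
    (hA : SatisfiesUAC A) : SatisfiesUAC B :=
  stmt7_general A B morita hA
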